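/- Let f = Σ_{n≥0} aₙxⁿ be a convergent real formal power series and let u, v, b ∈ ℝ. Then the Newton integral of the shifted series f(x+b) from u to v equals the Newton integral of f from u+b to v+b: Σ_{n≥0} cₙ·(v^{n+1} − u^{n+1})/(n+1) = Σ_{n≥0} aₙ·((v+b)^{n+1} − (u+b)^{n+1})/(n+1), where cₙ = Σ_{m≥n} C(m,n)·aₘ·b^{m−n} are the coefficients of f(x+b). -/

import Mathlib

/-!
Multiplying the `n`-th coefficient of `f(x+b)` by `t^{n+1}/(n+1)` gives the row sum over `m` of the
double series `C(m+n,n) aₘ₊ₙ bᵐ t^{n+1}/(n+1)`. Summed along the antidiagonals `m + n = k`, the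
binomial theorem turns these terms into `aₖ((t+b)^{k+1} − b^{k+1})/(k+1)`, i.e. the terms of
`(∫f)(t+b) − (∫f)(b)`. The same computation for `|a|, |b|, |t|` shows, using the convergence of `f`,
that the double series converges absolutely, so both ways of summing it agree. Thus the primitive of
`f(x+b)` at `t` is `(∫f)(t+b) − (∫f)(b)`, and the constant `(∫f)(b)` cancels in the Newton integral.
-/

open Filter Finset Topology

section Antidiagonal

variable {A : Type*} [AddCommMonoid A] [HasAntidiagonal A]

theorem HasSum.sum_antidiagonal {α : Type*} [AddCommMonoid α] [TopologicalSpace α]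
    [ContinuousAdd α] [RegularSpace α] {f : A × A → α} {s : α} (hf : HasSum f s) :
    HasSum (fun k => ∑ p ∈ antidiagonal k, f p) s := by
  have h := (HasAntidiagonal.sigmaAntidiagonalEquivProd.hasSum_iff.2 hf).sigma
    fun k => hasSum_fintype _
  simpa [Finset.sum_attach] using h

theorem summable_of_nonneg_of_summable_sum_antidiagonal {f : A × A → ℝ} (hf : 0 ≤ f)
    (h : Summable fun k => ∑ p ∈ antidiagonal k, f p) : Summable f := by
  refine HasAntidiagonal.sigmaAntidiagonalEquivProd.summable_iff.1
    ((summable_sigma_of_nonneg fun _ => hf _).2 ⟨fun _ => .of_finite, ?_⟩)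
  simpa [tsum_fintype, Finset.sum_attach] using h

end Antidiagonal

theorem sum_antidiagonal_choose_mul_pow_div (k : ℕ) (b t : ℝ) :
    ∑ p ∈ antidiagonal k, (k.choose p.1 : ℝ) * b ^ p.2 * t ^ (p.1 + 1) / ((p.1 : ℝ) + 1) =
      ((t + b) ^ (k + 1) - b ^ (k + 1)) / ((k : ℝ) + 1) := by
  rw [eq_div_iff (by positivity), sum_mul, (Commute.all t b).add_pow', Nat.sum_antidiagonal_succ]
  simp only [Nat.choose_zero_right, pow_zero, one_mul, one_smul, add_sub_cancel_left, nsmul_eq_mul]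
  refine sum_congr rfl fun p _ => ?_
  have hchoose : ((k : ℝ) + 1) * k.choose p.1 = (k + 1).choose (p.1 + 1) * ((p.1 : ℝ) + 1) := by
    exact_mod_cast Nat.add_one_mul_choose_eq k p.1
  field_simp
  linear_combination (b ^ p.2 * t ^ (p.1 + 1)) * hchoose

def ConvergentCoeffs (a : ℕ → ℝ) : Prop :=
  ∀ c : ℝ, Tendsto (fun n => a n * c ^ n) atTop (𝓝 0)

noncomputable def primitiveValue (a : ℕ → ℝ) (t : ℝ) : ℝ :=
  ∑' n : ℕ, a n * t ^ (n + 1) / ((n : ℝ) + 1)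

namespace ConvergentCoeffs

variable {a : ℕ → ℝ}

theorem abs (ha : ConvergentCoeffs a) : ConvergentCoeffs fun n => |a n| := fun c => by
  rw [tendsto_zero_iff_abs_tendsto_zero]
  simpa [Function.comp_def, abs_mul] using (ha c).abs

theorem summable_norm_mul_pow (ha : ConvergentCoeffs a) (r : ℝ) :
    Summable fun n => ‖a n * r ^ n‖ := by
  have hR : 0 < |r| + 1 := by positivity
  have hq : ‖|r| / (|r| + 1)‖ < 1 := by
    rw [Real.norm_eq_abs, abs_of_nonneg (by positivity), div_lt_one hR]
    linarith
  have hbdd : (fun n => a n * (|r| + 1) ^ n) =O[atTop] fun n => ((n ^ 0 : ℕ) : ℝ) := by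
    simpa using (ha (|r| + 1)).isBigO_one ℝ
  refine (summable_norm_mul_geometric_of_norm_lt_one' hq hbdd).congr fun n => ?_
  rw [mul_assoc, ← mul_pow, mul_div_cancel₀ _ hR.ne', norm_mul, norm_mul, norm_pow, norm_pow,
    Real.norm_eq_abs, Real.norm_eq_abs, Real.norm_eq_abs, abs_abs]

theorem summable_primitive (ha : ConvergentCoeffs a) (t : ℝ) :
    Summable fun n : ℕ => a n * t ^ (n + 1) / ((n : ℝ) + 1) := by
  refine .of_norm_bounded ((ha.summable_norm_mul_pow t).mul_right ‖t‖) fun n => ?_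
  rw [norm_div, pow_succ, ← mul_assoc, norm_mul _ t]
  refine div_le_self (by positivity) ?_
  rw [Real.norm_of_nonneg (by positivity)]
  linarith [n.cast_nonneg (α := ℝ)]

theorem hasSum_newtonIntegral (ha : ConvergentCoeffs a) (s t : ℝ) :
    HasSum (fun n : ℕ => a n * (t ^ (n + 1) - s ^ (n + 1)) / ((n : ℝ) + 1))
      (primitiveValue a t - primitiveValue a s) := by
  simpa only [primitiveValue, ← sub_div, ← mul_sub] using
    (ha.summable_primitive t).hasSum.sub (ha.summable_primitive s).hasSum

end ConvergentCoeffs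

noncomputable def shiftCoeff (a : ℕ → ℝ) (b : ℝ) (n : ℕ) : ℝ :=
  ∑' m : ℕ, ((m + n).choose n : ℝ) * a (m + n) * b ^ m

noncomputable def shiftTerm (a : ℕ → ℝ) (b t : ℝ) (p : ℕ × ℕ) : ℝ :=
  ((p.2 + p.1).choose p.1 : ℝ) * a (p.2 + p.1) * b ^ p.2 * t ^ (p.1 + 1) / ((p.1 : ℝ) + 1)

theorem sum_antidiagonal_shiftTerm (a : ℕ → ℝ) (b t : ℝ) (k : ℕ) :
    ∑ p ∈ antidiagonal k, shiftTerm a b t p =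
      a k * ((t + b) ^ (k + 1) - b ^ (k + 1)) / ((k : ℝ) + 1) := by
  rw [mul_div_assoc, ← sum_antidiagonal_choose_mul_pow_div, mul_sum]
  refine sum_congr rfl fun p hp => ?_
  rw [HasAntidiagonal.mem_antidiagonal] at hp
  rw [shiftTerm, add_comm p.2, hp]
  ring

theorem abs_shiftTerm (a : ℕ → ℝ) (b t : ℝ) (p : ℕ × ℕ) :
    |shiftTerm a b t p| = shiftTerm (fun n => |a n|) |b| |t| p := by
  simp only [shiftTerm, abs_div, abs_mul, abs_pow, Nat.abs_cast,
    abs_of_pos (by positivity : (0 : ℝ) < (p.1 : ℝ) + 1)]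

namespace ConvergentCoeffs

variable {a : ℕ → ℝ}

theorem summable_shiftTerm (ha : ConvergentCoeffs a) (b t : ℝ) : Summable (shiftTerm a b t) := by
  refine .of_abs (summable_of_nonneg_of_summable_sum_antidiagonal (fun p => abs_nonneg _) ?_)
  simp only [abs_shiftTerm, sum_antidiagonal_shiftTerm]
  exact (ha.abs.hasSum_newtonIntegral |b| (|t| + |b|)).summable

theorem hasSum_primitive_shiftCoeff (ha : ConvergentCoeffs a) (b t : ℝ) :
    HasSum (fun n : ℕ => shiftCoeff a b n * t ^ (n + 1) / ((n : ℝ) + 1))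
      (primitiveValue a (t + b) - primitiveValue a b) := by
  have hS := ha.summable_shiftTerm b t
  have hdiag : HasSum (fun k => ∑ p ∈ antidiagonal k, shiftTerm a b t p)
      (primitiveValue a (t + b) - primitiveValue a b) := by
    simpa only [sum_antidiagonal_shiftTerm] using ha.hasSum_newtonIntegral b (t + b)
  rw [← hS.hasSum.sum_antidiagonal.unique hdiag]
  refine hS.hasSum.prod_fiberwise fun n => ?_
  simpa only [shiftCoeff, shiftTerm, tsum_div_const, tsum_mul_right] using
    (hS.prod_factor n).hasSum

end ConvergentCoeffs

/-- For convergent `f = Σ aₙxⁿ` and `u, v, b ∈ ℝ`, the Newton integral of the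
shifted series `f(x+b)` from `u` to `v` equals the Newton integral of `f`
from `u+b` to `v+b`:
`Σₙ cₙ·(v^{n+1} − u^{n+1})/(n+1) = Σₙ aₙ·((v+b)^{n+1} − (u+b)^{n+1})/(n+1)`,
where `cₙ = Σ_{m≥n} C(m,n)·aₘ·b^{m−n}`. -/
theorem newton_integral_shift (a : ℕ → ℝ)
    (hconv : ∀ c : ℝ, Filter.Tendsto (fun n : ℕ => a n * c ^ n) Filter.atTop (nhds 0))
    (u v b : ℝ) :
    (∑' n : ℕ, (∑' m : ℕ, ((m + n).choose n : ℝ) * a (m + n) * b ^ m) *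
        (v ^ (n + 1) - u ^ (n + 1)) / ((n : ℝ) + 1))
      = ∑' n : ℕ, a n * ((v + b) ^ (n + 1) - (u + b) ^ (n + 1)) / ((n : ℝ) + 1) := by
  have ha : ConvergentCoeffs a := hconv
  have hshift :
      HasSum (fun n : ℕ => shiftCoeff a b n * (v ^ (n + 1) - u ^ (n + 1)) / ((n : ℝ) + 1))
        (primitiveValue a (v + b) - primitiveValue a (u + b)) := by
    simpa only [← sub_div, ← mul_sub, sub_sub_sub_cancel_right] using
      (ha.hasSum_primitive_shiftCoeff b v).sub (ha.hasSum_primitive_shiftCoeff b u)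
  exact hshift.tsum_eq.trans (ha.hasSum_newtonIntegral _ _).tsum_eq.symm
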